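/- arXiv:2505.22352 — 4 statements merged into one kernel-verified Lean document; each statement's English description precedes it below -/
import Mathlib

section
/- Let κ ∈ ℝ and let g : [0,∞) → ℝ be continuous with g(0) < κ. Suppose that for all real numbers 0 ≤ t₁ ≤ t₂, if g(s) < κ for every s ∈ [t₁, t₂], then g(t₂) ≤ g(t₁). Then g(t) ≤ g(0) < κ for all t ≥ 0. -/
/-- Abstract barrier-invariance lemma: if a continuous scalar function starts strictly
below the barrier level `κ` and is nonincreasing on every time interval throughout which
it stays below `κ`, then it stays below `g 0 < κ` for all time. -/
theorem barrier_invariance_scalar (κ : ℝ) (g : ℝ → ℝ)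
    (hg_cont : ContinuousOn g (Set.Ici (0 : ℝ)))
    (hg0 : g 0 < κ)
    (hmono : ∀ t₁ t₂ : ℝ, 0 ≤ t₁ → t₁ ≤ t₂ →
      (∀ s ∈ Set.Icc t₁ t₂, g s < κ) → g t₂ ≤ g t₁) :
    ∀ t : ℝ, 0 ≤ t → g t ≤ g 0 ∧ g 0 < κ := by
  -- Claim: g stays below κ everywhere on [0, ∞)
  have key : ∀ t : ℝ, 0 ≤ t → g t < κ := by
    by_contra h
    push_neg at h
    obtain ⟨t₀, ht₀, hκt₀⟩ := h
    set A : Set ℝ := Set.Ici (0 : ℝ) ∩ g ⁻¹' Set.Ici κ with hA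
    have hAne : A.Nonempty := ⟨t₀, ht₀, hκt₀⟩
    have hAbdd : BddBelow A := ⟨0, fun x hx => hx.1⟩
    have hAclosed : IsClosed A :=
      hg_cont.preimage_isClosed_of_isClosed isClosed_Ici isClosed_Ici
    set T := sInf A with hT
    have hTA : T ∈ A := hAclosed.csInf_mem hAne hAbdd
    have hT0 : 0 ≤ T := hTA.1
    have hκT : κ ≤ g T := hTA.2
    have hTpos : 0 < T := by
      rcases lt_or_eq_of_le hT0 with h | h
      · exact h
      · exact absurd (h ▸ hκT) (not_le.mpr hg0)
    -- For s ∈ [0, T), g s < κ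
    have hlt : ∀ s, 0 ≤ s → s < T → g s < κ := by
      intro s hs hsT
      by_contra hc
      push_neg at hc
      exact absurd (csInf_le hAbdd ⟨hs, hc⟩) (not_le.mpr hsT)
    -- For t ∈ [0, T), g t ≤ g 0
    have hle : ∀ t ∈ Set.Ico (0 : ℝ) T, g t ≤ g 0 := by
      intro t ⟨ht, htT⟩
      exact hmono 0 t le_rfl ht fun s hs => hlt s hs.1 (lt_of_le_of_lt hs.2 htT)
    -- The set C where g ≤ g 0 within [0, T] is closed and contains [0, T)
    set C : Set ℝ := Set.Icc 0 T ∩ g ⁻¹' Set.Iic (g 0) with hC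
    have hCclosed : IsClosed C :=
      (hg_cont.mono (Set.Icc_subset_Ici_self)).preimage_isClosed_of_isClosed
        isClosed_Icc isClosed_Iic
    have hsub : Set.Ico (0 : ℝ) T ⊆ C := fun x hx =>
      ⟨⟨hx.1, hx.2.le⟩, hle x hx⟩
    have hTC : T ∈ C := by
      have h1 : T ∈ closure (Set.Ico (0 : ℝ) T) := by
        rw [closure_Ico (ne_of_lt hTpos)]
        exact ⟨hT0, le_rfl⟩
      exact hCclosed.closure_subset (closure_mono hsub h1)
    exact absurd (lt_of_le_of_lt hTC.2 hg0) (not_lt.mpr hκT)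
  intro t ht
  exact ⟨hmono 0 t le_rfl ht fun s hs => key s hs.1, hg0⟩
end

section
/- Let n ≥ 1, κ > 0, let r : [0,∞) → ℝⁿ be continuous with ‖r(0)‖ < κ, and let φ : [0,∞) → ℝ be continuous with φ(t) ≥ 0 for all t. For t with ‖r(t)‖ < κ define V(t) = (1/2)·log(κ² / (κ² − ‖r(t)‖²)) + φ(t). Assume that for all 0 ≤ t₁ ≤ t₂ such that ‖r(s)‖ < κ for every s ∈ [t₁, t₂], one has V(t₂) ≤ V(t₁). Then for every t ≥ 0: ‖r(t)‖ < κ, ‖r(t)‖² ≤ κ²(1 − exp(−2·V(0))), and φ(t) ≤ V(0). -/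
/-- Barrier Lyapunov function invariance (Lemma 1, concrete instantiation): if the
composite Lyapunov function `V t = (1/2)·log(κ²/(κ² − ‖r t‖²)) + φ t` is nonincreasing
on every interval where `‖r‖ < κ`, and `‖r 0‖ < κ`, then `‖r t‖ < κ` for all `t ≥ 0`,
with explicit bounds. -/
theorem blf_invariance (n : ℕ) (hn : 1 ≤ n) (κ : ℝ) (hκ : 0 < κ)
    (r : ℝ → EuclideanSpace ℝ (Fin n))
    (hr_cont : ContinuousOn r (Set.Ici (0 : ℝ)))
    (hr0 : ‖r 0‖ < κ)
    (φ : ℝ → ℝ)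
    (hφ_cont : ContinuousOn φ (Set.Ici (0 : ℝ)))
    (hφ_nonneg : ∀ t : ℝ, 0 ≤ t → 0 ≤ φ t)
    (V : ℝ → ℝ)
    (hV_def : ∀ t : ℝ, V t = (1 / 2) * Real.log (κ ^ 2 / (κ ^ 2 - ‖r t‖ ^ 2)) + φ t)
    (hV_mono : ∀ t₁ t₂ : ℝ, 0 ≤ t₁ → t₁ ≤ t₂ →
      (∀ s ∈ Set.Icc t₁ t₂, ‖r s‖ < κ) → V t₂ ≤ V t₁) :
    ∀ t : ℝ, 0 ≤ t →
      ‖r t‖ < κ ∧ ‖r t‖ ^ 2 ≤ κ ^ 2 * (1 - Real.exp (-2 * V 0)) ∧ φ t ≤ V 0 := by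
  -- Key algebraic consequence of `V t ≤ V 0` when `‖r t‖ < κ`.
  have key : ∀ t : ℝ, 0 ≤ t → ‖r t‖ < κ → V t ≤ V 0 →
      ‖r t‖ ^ 2 ≤ κ ^ 2 * (1 - Real.exp (-2 * V 0)) ∧ φ t ≤ V 0 := by
    intro t ht hlt hV
    have hx0 : (0:ℝ) ≤ ‖r t‖ ^ 2 := by positivity
    have hxκ : ‖r t‖ ^ 2 < κ ^ 2 := by nlinarith [norm_nonneg (r t)]
    have hd0 : 0 < κ ^ 2 - ‖r t‖ ^ 2 := by linarith
    have hratio1 : (1:ℝ) ≤ κ ^ 2 / (κ ^ 2 - ‖r t‖ ^ 2) := by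
      rw [le_div_iff₀ hd0]; nlinarith
    have hlog0 : 0 ≤ Real.log (κ ^ 2 / (κ ^ 2 - ‖r t‖ ^ 2)) := Real.log_nonneg hratio1
    have hφt := hφ_nonneg t ht
    have hVt := hV_def t
    have hφle : φ t ≤ V 0 := by nlinarith
    have hloghalf : Real.log (κ ^ 2 / (κ ^ 2 - ‖r t‖ ^ 2)) ≤ 2 * V 0 := by nlinarith
    have hexp : κ ^ 2 / (κ ^ 2 - ‖r t‖ ^ 2) ≤ Real.exp (2 * V 0) := by
      calc κ ^ 2 / (κ ^ 2 - ‖r t‖ ^ 2)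
          = Real.exp (Real.log (κ ^ 2 / (κ ^ 2 - ‖r t‖ ^ 2))) :=
            (Real.exp_log (by positivity)).symm
        _ ≤ Real.exp (2 * V 0) := Real.exp_le_exp.mpr hloghalf
    have h1 : κ ^ 2 ≤ Real.exp (2 * V 0) * (κ ^ 2 - ‖r t‖ ^ 2) := by
      rw [div_le_iff₀ hd0] at hexp; linarith
    have hee : Real.exp (-2 * V 0) * Real.exp (2 * V 0) = 1 := by
      rw [← Real.exp_add]; ring_nf; exact Real.exp_zero
    have hepos : 0 < Real.exp (-2 * V 0) := Real.exp_pos _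
    refine ⟨?_, hφle⟩
    nlinarith [mul_le_mul_of_nonneg_left h1 hepos.le]
  -- Invariance: `‖r‖ < κ` on all of `[0, ∞)`.
  have inv : ∀ t : ℝ, 0 ≤ t → ‖r t‖ < κ := by
    by_contra h
    push_neg at h
    obtain ⟨s, hs0, hbad⟩ := h
    set B := {u : ℝ | 0 ≤ u ∧ κ ≤ ‖r u‖} with hB
    have hBne : B.Nonempty := ⟨s, hs0, hbad⟩
    have hBbd : BddBelow B := ⟨0, fun u hu => hu.1⟩
    have hBclosed : IsClosed B := by
      have h1 : B = Set.Ici 0 ∩ (fun u => ‖r u‖) ⁻¹' Set.Ici κ := by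
        ext u; simp [hB, Set.mem_setOf_eq]
      rw [h1]
      exact ContinuousOn.preimage_isClosed_of_isClosed (hr_cont.norm) isClosed_Ici isClosed_Ici
    set τ := sInf B with hτ
    have hτB : τ ∈ B := hBclosed.csInf_mem hBne hBbd
    obtain ⟨hτ0, hτκ⟩ := hτB
    have hτpos : 0 < τ := by
      rcases lt_or_eq_of_le hτ0 with h | h
      · exact h
      · exfalso; rw [← h] at hτκ; linarith
    -- On `[0, τ)` the norm stays below `κ`, hence bounded away from `κ`.
    have hlt : ∀ u ∈ Set.Ico (0:ℝ) τ, ‖r u‖ < κ := by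
      intro u hu
      by_contra hge
      push_neg at hge
      have : τ ≤ u := csInf_le hBbd ⟨hu.1, hge⟩
      exact absurd hu.2 (not_lt.mpr this)
    have hbound : ∀ u ∈ Set.Ico (0:ℝ) τ, ‖r u‖ ^ 2 ≤ κ ^ 2 * (1 - Real.exp (-2 * V 0)) := by
      intro u hu
      have hVle : V u ≤ V 0 := hV_mono 0 u le_rfl hu.1
        (fun w hw => hlt w ⟨hw.1, lt_of_le_of_lt hw.2 hu.2⟩)
      exact (key u hu.1 (hlt u hu) hVle).1
    -- Pass to the limit at `τ`.
    have hg : ContinuousWithinAt (fun u => ‖r u‖ ^ 2) (Set.Ici (0:ℝ)) τ :=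
      ((hr_cont.norm).pow 2) τ (Set.mem_Ici.mpr hτ0)
    have hmem : τ ∈ closure (Set.Ico (0:ℝ) τ) := by
      rw [closure_Ico (ne_of_lt hτpos)]
      exact ⟨hτ0, le_rfl⟩
    have hne : (nhdsWithin τ (Set.Ico (0:ℝ) τ)).NeBot :=
      mem_closure_iff_nhdsWithin_neBot.mp hmem
    have htend : Filter.Tendsto (fun u => ‖r u‖ ^ 2) (nhdsWithin τ (Set.Ico (0:ℝ) τ))
        (nhds (‖r τ‖ ^ 2)) :=
      hg.tendsto.mono_left (nhdsWithin_mono τ (fun u hu => hu.1))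
    have hlim : ‖r τ‖ ^ 2 ≤ κ ^ 2 * (1 - Real.exp (-2 * V 0)) := by
      refine le_of_tendsto htend ?_
      filter_upwards [self_mem_nhdsWithin] with u hu using hbound u hu
    have hexpos : 0 < Real.exp (-2 * V 0) := Real.exp_pos _
    have : κ ^ 2 ≤ ‖r τ‖ ^ 2 := by nlinarith
    have hκ2 : 0 < κ ^ 2 := by positivity
    nlinarith [mul_pos hκ2 hexpos]
  intro t ht
  have hVle : V t ≤ V 0 := hV_mono 0 t le_rfl ht (fun w hw => inv w hw.1)
  obtain ⟨h1, h2⟩ := key t ht (inv t ht) hVle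
  exact ⟨inv t ht, h1, h2⟩
end

section
/- Let n ≥ 1 and let α, 𝓔_Q, 𝓔_𝒱 be positive reals with α·𝓔_Q < 𝓔_𝒱, and set κ := 𝓔_𝒱 − α·𝓔_Q. Let e : [0,∞) → ℝⁿ be continuously differentiable with ‖e(0)‖ ≤ 𝓔_Q − κ/α and ‖e'(t) + α·e(t)‖ ≤ κ for all t ≥ 0. Then ‖e(t)‖ ≤ 𝓔_Q and ‖e'(t)‖ ≤ 𝓔_𝒱 for all t ≥ 0. -/
/-- Error-constraint satisfaction (equations (33)–(35) of the paper): with gain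
condition `α·𝓔_Q < 𝓔_𝒱`, `κ = 𝓔_𝒱 − α·𝓔_Q`, initialization `‖e(0)‖ ≤ 𝓔_Q − κ/α`
and filtered-error bound `‖e'(t) + α·e(t)‖ ≤ κ`, the position and velocity tracking
errors satisfy `‖e(t)‖ ≤ 𝓔_Q` and `‖e'(t)‖ ≤ 𝓔_𝒱`. -/
theorem error_constraint_satisfaction (n : ℕ) (hn : 1 ≤ n)
    (α EQ EV : ℝ) (hα : 0 < α) (hEQ : 0 < EQ) (hEV : 0 < EV)
    (hgain : α * EQ < EV) (κ : ℝ) (hκ : κ = EV - α * EQ)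
    (e e' : ℝ → EuclideanSpace ℝ (Fin n))
    (hderiv : ∀ t : ℝ, 0 ≤ t → HasDerivWithinAt e (e' t) (Set.Ici (0 : ℝ)) t)
    (hcont : ContinuousOn e' (Set.Ici (0 : ℝ)))
    (he0 : ‖e 0‖ ≤ EQ - κ / α)
    (hr : ∀ t : ℝ, 0 ≤ t → ‖e' t + α • e t‖ ≤ κ) :
    ∀ t : ℝ, 0 ≤ t → ‖e t‖ ≤ EQ ∧ ‖e' t‖ ≤ EV := by
  have hκpos : 0 < κ := by rw [hκ]; linarith
  have hka : κ / α ≤ EQ := by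
    have := norm_nonneg (e 0); linarith
  have hkapos : 0 < κ / α := div_pos hκpos hα
  -- main position bound
  have hQ : ∀ t : ℝ, 0 ≤ t → ‖e t‖ ≤ EQ := by
    intro T hT
    set f : ℝ → EuclideanSpace ℝ (Fin n) := fun t => Real.exp (α * t) • e t with hf_def
    set f' : ℝ → EuclideanSpace ℝ (Fin n) :=
      fun t => Real.exp (α * t) • (e' t + α • e t) with hf'_def
    set B : ℝ → ℝ := fun t => ‖e 0‖ + κ / α * (Real.exp (α * t) - 1) with hB_def
    set B' : ℝ → ℝ := fun t => κ * Real.exp (α * t) with hB'_def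
    have hecont : ContinuousOn e (Set.Ici (0 : ℝ)) :=
      fun t ht => (hderiv t ht).continuousWithinAt
    have hfc : ContinuousOn f (Set.Icc (0 : ℝ) T) := by
      refine ContinuousOn.smul (f := fun t => Real.exp (α * t)) (g := e) ?_ ?_
      · exact (Real.continuous_exp.comp (continuous_const.mul continuous_id)).continuousOn
      · exact hecont.mono (Set.Icc_subset_Ici_self)
    have hf' : ∀ x ∈ Set.Ico (0 : ℝ) T, HasDerivWithinAt f (f' x) (Set.Ici x) x := by
      intro x hx
      have hex : HasDerivWithinAt e (e' x) (Set.Ici x) x :=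
        (hderiv x hx.1).mono (Set.Ici_subset_Ici.2 hx.1)
      have hc : HasDerivWithinAt (fun t => Real.exp (α * t))
          (α * Real.exp (α * x)) (Set.Ici x) x := by
        have : HasDerivAt (fun t => Real.exp (α * t)) (Real.exp (α * x) * (α * 1)) x :=
          ((hasDerivAt_id x).const_mul α).exp
        simpa [mul_comm] using this.hasDerivWithinAt
      have := hc.smul hex
      refine this.congr_deriv ?_
      simp only [hf'_def]
      rw [smul_add, smul_smul, mul_comm (Real.exp (α * x)) α]
    have hB' : ∀ x : ℝ, HasDerivAt B (B' x) x := by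
      intro x
      have h1 : HasDerivAt (fun t => Real.exp (α * t)) (Real.exp (α * x) * α) x := by
        simpa using ((hasDerivAt_id x).const_mul α).exp
      have h2 : HasDerivAt (fun t => ‖e 0‖ + κ / α * (Real.exp (α * t) - 1))
          (κ / α * (Real.exp (α * x) * α)) x :=
        ((h1.sub_const 1).const_mul (κ / α)).const_add _
      convert h2 using 1
      field_simp [hB'_def]
      ring
    have hbound : ∀ x ∈ Set.Ico (0 : ℝ) T, ‖f' x‖ ≤ B' x := by
      intro x hx
      have heq : ‖f' x‖ = Real.exp (α * x) * ‖e' x + α • e x‖ := by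
        simp only [hf'_def]
        rw [norm_smul, Real.norm_eq_abs, Real.abs_exp]
      rw [heq]
      show Real.exp (α * x) * ‖e' x + α • e x‖ ≤ κ * Real.exp (α * x)
      have := hr x hx.1
      nlinarith [Real.exp_pos (α * x)]
    have ha : ‖f 0‖ ≤ B 0 := by simp [hf_def, hB_def]
    have hmain := image_norm_le_of_norm_deriv_right_le_deriv_boundary hfc hf' ha hB' hbound
      (Set.right_mem_Icc.2 hT)
    -- hmain : ‖f T‖ ≤ B T
    have hE1 : (1 : ℝ) ≤ Real.exp (α * T) :=
      Real.one_le_exp (by positivity)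
    have hfT : ‖f T‖ = Real.exp (α * T) * ‖e T‖ := by
      simp only [hf_def]
      rw [norm_smul, Real.norm_eq_abs, Real.abs_exp]
    rw [hfT, hB_def] at hmain
    have hEpos : 0 < Real.exp (α * T) := Real.exp_pos _
    have hgoal : Real.exp (α * T) * ‖e T‖ ≤ Real.exp (α * T) * EQ := by
      have : ‖e 0‖ + κ / α * (Real.exp (α * T) - 1) ≤ Real.exp (α * T) * EQ := by
        nlinarith [mul_le_mul_of_nonneg_left hka (sub_nonneg.2 hE1)]
      linarith
    exact le_of_mul_le_mul_left hgoal hEpos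
  intro t ht
  refine ⟨hQ t ht, ?_⟩
  have : e' t = (e' t + α • e t) - α • e t := by abel
  calc ‖e' t‖ = ‖(e' t + α • e t) - α • e t‖ := by rw [← this]
    _ ≤ ‖e' t + α • e t‖ + ‖α • e t‖ := norm_sub_le _ _
    _ ≤ κ + α * EQ := by
        have h1 := hr t ht
        have h2 : ‖α • e t‖ = α * ‖e t‖ := by
          rw [norm_smul, Real.norm_eq_abs, abs_of_pos hα]
        have := hQ t ht
        nlinarith
    _ = EV := by rw [hκ]; ring
end

section
/- Let n ≥ 1, let α, 𝓔_Q, 𝓔_𝒱 be positive reals with α·𝓔_Q < 𝓔_𝒱, set κ := 𝓔_𝒱 − α·𝓔_Q, and let Q̄_d, 𝒱̄_d ≥ 0. Let q_d : [0,∞) → ℝⁿ be differentiable with ‖q_d(t)‖ ≤ Q̄_d and ‖q_d'(t)‖ ≤ 𝒱̄_d for all t ≥ 0, let q : [0,∞) → ℝⁿ be continuously differentiable, and set e := q − q_d. Assume ‖e(0)‖ ≤ 𝓔_Q − κ/α and ‖e'(t) + α·e(t)‖ ≤ κ for all t ≥ 0. Then ‖q(t)‖ ≤ Q̄_d + 𝓔_Q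 and ‖q'(t)‖ ≤ 𝒱̄_d + 𝓔_𝒱 for all t ≥ 0. -/
/-- State-constraint satisfaction (claim (i) of Theorem 1): a bound `κ` on the
filtered tracking error `e' + α·e` (with `e = q − q_d`) propagates to the
user-defined position and velocity constraints `‖q(t)‖ ≤ Q̄_d + 𝓔_Q` and
`‖q'(t)‖ ≤ 𝒱̄_d + 𝓔_𝒱` on the plant states. -/
theorem state_constraint_satisfaction (n : ℕ) (hn : 1 ≤ n)
    (α EQ EV : ℝ) (hα : 0 < α) (hEQ : 0 < EQ) (hEV : 0 < EV)
    (hgain : α * EQ < EV) (κ : ℝ) (hκ : κ = EV - α * EQ)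
    (Qd Vd : ℝ) (hQd : 0 ≤ Qd) (hVd : 0 ≤ Vd)
    (qd qd' : ℝ → EuclideanSpace ℝ (Fin n))
    (hqd_deriv : ∀ t : ℝ, 0 ≤ t → HasDerivWithinAt qd (qd' t) (Set.Ici (0 : ℝ)) t)
    (hqd_bound : ∀ t : ℝ, 0 ≤ t → ‖qd t‖ ≤ Qd)
    (hqd'_bound : ∀ t : ℝ, 0 ≤ t → ‖qd' t‖ ≤ Vd)
    (q q' : ℝ → EuclideanSpace ℝ (Fin n))
    (hq_deriv : ∀ t : ℝ, 0 ≤ t → HasDerivWithinAt q (q' t) (Set.Ici (0 : ℝ)) t)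
    (hq_cont : ContinuousOn q' (Set.Ici (0 : ℝ)))
    (e e' : ℝ → EuclideanSpace ℝ (Fin n))
    (he_def : ∀ t : ℝ, e t = q t - qd t)
    (he'_def : ∀ t : ℝ, e' t = q' t - qd' t)
    (he0 : ‖e 0‖ ≤ EQ - κ / α)
    (hr : ∀ t : ℝ, 0 ≤ t → ‖e' t + α • e t‖ ≤ κ) :
    ∀ t : ℝ, 0 ≤ t → ‖q t‖ ≤ Qd + EQ ∧ ‖q' t‖ ≤ Vd + EV := by
  have hκpos : 0 < κ := by rw [hκ]; linarith
  have hκα : 0 < κ / α := div_pos hκpos hα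
  have he0' : 0 ≤ EQ - κ / α := le_trans (norm_nonneg _) he0
  have heq : e = fun s => q s - qd s := funext he_def
  have heD : ∀ s : ℝ, 0 ≤ s → HasDerivWithinAt e (e' s) (Set.Ici (0:ℝ)) s := by
    intro s hs
    rw [heq, he'_def]
    exact (hq_deriv s hs).sub (hqd_deriv s hs)
  have he_cont : ContinuousOn e (Set.Ici (0:ℝ)) :=
    fun s hs => (heD s hs).continuousWithinAt
  -- main bound: ∀ t ≥ 0, ‖e t‖ ≤ EQ
  have heE : ∀ t : ℝ, 0 ≤ t → ‖e t‖ ≤ EQ := by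
    intro t ht
    set f : ℝ → EuclideanSpace ℝ (Fin n) := fun s => Real.exp (α*s) • e s with hf
    have hexp : ∀ s : ℝ, HasDerivAt (fun u => Real.exp (α*u)) (α * Real.exp (α*s)) s := by
      intro s
      exact ((Real.hasDerivAt_exp (α*s)).comp s ((hasDerivAt_id s).const_mul α)).congr_deriv (by simp only [id, mul_one]; ring)
    have hfD : ∀ s ∈ Set.Ico (0:ℝ) t,
        HasDerivWithinAt f (Real.exp (α*s) • (e' s + α • e s)) (Set.Ici s) s := by
      intro s hs
      have he' : HasDerivWithinAt e (e' s) (Set.Ici s) s :=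
        (heD s hs.1).mono (Set.Ici_subset_Ici.mpr hs.1)
      have h2 := (hexp s).hasDerivWithinAt.smul he'
      refine h2.congr_deriv ?_
      rw [smul_add, smul_smul, mul_comm (Real.exp (α*s)) α]
    have hf_cont : ContinuousOn f (Set.Icc 0 t) := by
      refine ContinuousOn.smul (f := fun s => Real.exp (α*s)) (g := e) ?_ ?_
      · exact (Real.continuous_exp.comp (continuous_const.mul continuous_id)).continuousOn
      · exact he_cont.mono (Set.Icc_subset_Ici_self)
    set B : ℝ → ℝ := fun s => ‖e 0‖ + κ/α * (Real.exp (α*s) - 1) with hBdef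
    have hBD : ∀ s : ℝ, HasDerivAt B (κ * Real.exp (α*s)) s := by
      intro s
      have := (((hexp s).sub_const 1).const_mul (κ/α)).const_add ‖e 0‖
      refine this.congr_deriv ?_
      rw [div_mul_eq_mul_div, div_eq_iff hα.ne']
      ring
    have hbound : ∀ s ∈ Set.Ico (0:ℝ) t, ‖Real.exp (α*s) • (e' s + α • e s)‖ ≤ κ * Real.exp (α*s) := by
      intro s hs
      rw [norm_smul, Real.norm_eq_abs, abs_of_pos (Real.exp_pos _), mul_comm]
      exact mul_le_mul_of_nonneg_right (hr s hs.1) (Real.exp_pos _).le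
    have hB0 : ‖f 0‖ ≤ B 0 := by simp [hf, hBdef]
    have key := image_norm_le_of_norm_deriv_right_le_deriv_boundary hf_cont hfD hB0 hBD hbound
      (Set.right_mem_Icc.mpr ht)
    have hexp1 : (1:ℝ) ≤ Real.exp (α*t) := Real.one_le_exp (by positivity)
    have hft : ‖f t‖ = Real.exp (α*t) * ‖e t‖ := by
      rw [hf]; rw [norm_smul, Real.norm_eq_abs, abs_of_pos (Real.exp_pos _)]
    rw [hft, hBdef] at key
    simp only at key
    nlinarith [Real.exp_pos (α*t), norm_nonneg (e t), he0]
  intro t ht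
  have he'E : ‖e' t‖ ≤ EV := by
    have : ‖e' t‖ ≤ ‖e' t + α • e t‖ + ‖α • e t‖ := by
      calc ‖e' t‖ = ‖(e' t + α • e t) - α • e t‖ := by rw [add_sub_cancel_right]
        _ ≤ _ := norm_sub_le _ _
    have h2 : ‖α • e t‖ ≤ α * EQ := by
      rw [norm_smul, Real.norm_eq_abs, abs_of_pos hα]
      exact mul_le_mul_of_nonneg_left (heE t ht) hα.le
    have := hr t ht
    linarith
  constructor
  · have : ‖q t‖ ≤ ‖e t‖ + ‖qd t‖ := by
      calc ‖q t‖ = ‖e t + qd t‖ := by rw [he_def, sub_add_cancel]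
        _ ≤ _ := norm_add_le _ _
    linarith [heE t ht, hqd_bound t ht]
  · have : ‖q' t‖ ≤ ‖e' t‖ + ‖qd' t‖ := by
      calc ‖q' t‖ = ‖e' t + qd' t‖ := by rw [he'_def, sub_add_cancel]
        _ ≤ _ := norm_add_le _ _
    linarith [hqd'_bound t ht]
end
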